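/- Let H be symmetric with μ·I ⪯ H (μ > 0), and let H^S = I_S^⊤ (I_S H^{-1} I_S^⊤)^{-1} I_S for a set S ⊆ [d]. Then for any vector x ∈ ℝ^d, ‖H^{-1} H^S x‖₂² ≤ (1/μ) · x^⊤ H^S x. -/

import Mathlib

open Matrix Finset

/-- The selection matrix `I_S ∈ ℝ^{|S|×d}` whose rows are the standard basis vectors
`eᵢᵀ` for `i ∈ S`. -/
def selMat {d : ℕ} (S : Finset (Fin d)) : Matrix {i // i ∈ S} (Fin d) ℝ :=
  Matrix.of fun i j => if (i : Fin d) = j then (1 : ℝ) else 0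

/-- The matrix `H^S = I_Sᵀ (I_S H⁻¹ I_Sᵀ)⁻¹ I_S`. -/
noncomputable def HmatS {d : ℕ} (H : Matrix (Fin d) (Fin d) ℝ) (S : Finset (Fin d)) :
    Matrix (Fin d) (Fin d) ℝ :=
  (selMat S)ᵀ * (selMat S * H⁻¹ * (selMat S)ᵀ)⁻¹ * selMat S

/-- The diagonal projection matrix `E_S` onto the coordinates in `S`. -/
def projMat {d : ℕ} (S : Finset (Fin d)) : Matrix (Fin d) (Fin d) ℝ :=
  Matrix.diagonal fun i => if i ∈ S then (1 : ℝ) else 0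

/-!
With `G = H^S`, the identity `G H⁻¹ G = G` (equivalently, `H⁻¹ G` is idempotent) and the symmetry
of `H` and `G` give `yᵀ H y = xᵀ G x` for `y = H⁻¹ G x`. The lower bound `μ ‖y‖² ≤ yᵀ H y` then
yields the claim.
-/

namespace Matrix

variable {m n R : Type*} [Fintype m] [Fintype n] [CommRing R]

omit [Fintype n] in
theorem IsSymm.transpose_mul_mul (A : Matrix m n R) {B : Matrix m m R} (hB : B.IsSymm) :
    (Aᵀ * B * A).IsSymm := by
  simp only [IsSymm, transpose_mul, transpose_transpose, hB.eq, Matrix.mul_assoc]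

theorem transpose_mul_inv_mul_mul_mul_self [DecidableEq m] (A : Matrix m n R) (K : Matrix n n R)
    (hM : IsUnit (A * K * Aᵀ)) :
    Aᵀ * (A * K * Aᵀ)⁻¹ * A * K * (Aᵀ * (A * K * Aᵀ)⁻¹ * A) = Aᵀ * (A * K * Aᵀ)⁻¹ * A := by
  have hdet := (isUnit_iff_isUnit_det _).mp hM
  calc Aᵀ * (A * K * Aᵀ)⁻¹ * A * K * (Aᵀ * (A * K * Aᵀ)⁻¹ * A)
      = Aᵀ * ((A * K * Aᵀ)⁻¹ * (A * K * Aᵀ)) * (A * K * Aᵀ)⁻¹ * A := by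
        simp only [Matrix.mul_assoc]
    _ = Aᵀ * (A * K * Aᵀ)⁻¹ * A := by rw [nonsing_inv_mul _ hdet, Matrix.mul_one]

theorem dotProduct_mulVec_inv_mul_mulVec [DecidableEq n] {H G : Matrix n n R} (hH : H.IsSymm)
    (hHu : IsUnit H) (hG : G.IsSymm) (hGHG : G * H⁻¹ * G = G) (x : n → R) :
    (H⁻¹ * G) *ᵥ x ⬝ᵥ H *ᵥ ((H⁻¹ * G) *ᵥ x) = x ⬝ᵥ G *ᵥ x := by
  have hgram : (H⁻¹ * G)ᵀ * (H * (H⁻¹ * G)) = G := by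
    rw [transpose_mul, transpose_nonsing_inv, hH.eq, hG.eq,
      mul_nonsing_inv_cancel_left H G ((isUnit_iff_isUnit_det _).mp hHu), hGHG]
  rw [mulVec_mulVec, ← vecMul_transpose, ← dotProduct_mulVec, mulVec_mulVec, hgram]

end Matrix

theorem selMat_mul_transpose {d : ℕ} (S : Finset (Fin d)) : selMat S * (selMat S)ᵀ = 1 := by
  ext ⟨i, hi⟩ ⟨j, hj⟩
  simp only [selMat, mul_apply, transpose_apply, of_apply, one_apply, Subtype.mk.injEq, mul_ite,
    mul_one, mul_zero, Finset.sum_ite_eq, Finset.mem_univ, if_true]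

theorem selMat_vecMul_injective {d : ℕ} (S : Finset (Fin d)) :
    Function.Injective (selMat S).vecMul :=
  Function.LeftInverse.injective (g := fun w => w ᵥ* (selMat S)ᵀ) fun v => by
    simp only [vecMul_vecMul, selMat_mul_transpose, vecMul_one]

theorem Matrix.PosDef.selMat_mul_mul_transpose {d : ℕ} {K : Matrix (Fin d) (Fin d) ℝ}
    (hK : K.PosDef) (S : Finset (Fin d)) : (selMat S * K * (selMat S)ᵀ).PosDef := by
  simpa using hK.mul_mul_conjTranspose_same (selMat_vecMul_injective S)

theorem isSymm_HmatS {d : ℕ} {H : Matrix (Fin d) (Fin d) ℝ} (hH : H.IsSymm)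
    (S : Finset (Fin d)) : (HmatS H S).IsSymm :=
  IsSymm.transpose_mul_mul _ (IsSymm.inv (IsSymm.transpose_mul_mul _ hH.inv))

theorem HmatS_mul_inv_mul_HmatS {d : ℕ} {H : Matrix (Fin d) (Fin d) ℝ} (hH : H.PosDef)
    (S : Finset (Fin d)) : HmatS H S * H⁻¹ * HmatS H S = HmatS H S :=
  transpose_mul_inv_mul_mul_mul_self _ _ (hH.inv.selMat_mul_mul_transpose S).isUnit

/-- For symmetric `H` with `μ·I ⪯ H` (`μ > 0`) and `H^S = I_Sᵀ(I_S H⁻¹ I_Sᵀ)⁻¹ I_S`,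
for any vector `x`: `‖H⁻¹ H^S x‖₂² ≤ (1/μ) xᵀ H^S x`. -/
theorem norm_sq_le_quadform {d : ℕ} (H : Matrix (Fin d) (Fin d) ℝ) (hH : H.PosDef)
    (μ : ℝ) (hμ : 0 < μ)
    (hμH : ∀ x : Fin d → ℝ, μ * ∑ i, x i ^ 2 ≤ x ⬝ᵥ H.mulVec x)
    (S : Finset (Fin d)) (x : Fin d → ℝ) :
    ∑ i, ((H⁻¹ * HmatS H S).mulVec x i) ^ 2 ≤ (1 / μ) * (x ⬝ᵥ (HmatS H S).mulVec x) := by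
  have hHsymm : H.IsSymm := isHermitian_iff_isSymm.mp hH.isHermitian
  rw [one_div_mul_eq_div, le_div_iff₀' hμ, ← dotProduct_mulVec_inv_mul_mulVec hHsymm hH.isUnit
    (isSymm_HmatS hHsymm S) (HmatS_mul_inv_mul_HmatS hH S)]
  exact hμH _
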